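/- Let n be a positive integer, let A be a complex symmetric n×n matrix with I − AᴴA positive definite, and let S = [[λ, μ], [ν, ρ]] be a complex symplectic 2n×2n matrix (Sᵀ J S = J with J = [[0, I], [−I, 0]]) which maps K-positive vectors to K-positive vectors (vᴴ K v > 0 implies (Sv)ᴴ K (Sv) > 0, with K = [[I, 0], [0, −I]]). Then λ + μA is invertible and the matrix A' = (ρA + ν)(λ + μA)⁻¹ is again complex symmetric with I − A'ᴴA' positive definite. -/

import Mathlib

open Matrix
open scoped ComplexOrder

/-!
The graph vector `(x, A x)` is `K`-positive precisely because `A` is a strict contraction, and `S`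
maps it to `((λ + μA) x, (ρA + ν) x)`. So `K`-positivity of the image says
`‖(ρA + ν) x‖ < ‖(λ + μA) x‖` for every `x ≠ 0`: hence `λ + μA` is injective, and substituting
`x = (λ + μA)⁻¹ y` shows that `A'` is a strict contraction. Symmetry of `A' = Y X⁻¹`, with
`X = λ + μA` and `Y = ρA + ν`, is equivalent to `Xᵀ Y = Yᵀ X`; with `G = [1; A]` (so `S G = [X; Y]`)
this reads `Xᵀ Y - Yᵀ X = Gᵀ Sᵀ J S G = Gᵀ J G = A - Aᵀ = 0`.
-/

namespace Matrix

variable {m R 𝕜 : Type*} [Fintype m]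

theorem fromBlocks_mulVec_sumElim_mulVec [Semiring R] (a b c d A : Matrix m m R) (x : m → R) :
    fromBlocks a b c d *ᵥ Sum.elim x (A *ᵥ x) =
      Sum.elim ((a + b * A) *ᵥ x) ((d * A + c) *ᵥ x) := by
  simp only [fromBlocks_mulVec, Sum.elim_comp_inl, Sum.elim_comp_inr, add_mulVec, mulVec_mulVec,
    add_comm]

variable [DecidableEq m]

theorem star_sumElim_dotProduct_fromBlocks_one_neg_one_mulVec [Ring R] [StarRing R] (u w : m → R) :
    star (Sum.elim u w) ⬝ᵥ (fromBlocks 1 0 0 (-1) *ᵥ Sum.elim u w) =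
      star u ⬝ᵥ u - star w ⬝ᵥ w := by
  simp [fromBlocks_mulVec, Function.star_sumElim, sumElim_dotProduct_sumElim, neg_mulVec,
    sub_eq_add_neg]

section CommRing

variable [CommRing R]

theorem transpose_mul_comm_of_symplectic {a b c d A : Matrix m m R}
    (hS : (fromBlocks a b c d)ᵀ * fromBlocks 0 1 (-1) 0 * fromBlocks a b c d =
      fromBlocks 0 1 (-1) 0) (hA : Aᵀ = A) :
    (a + b * A)ᵀ * (d * A + c) = (d * A + c)ᵀ * (a + b * A) := by
  simp only [fromBlocks_transpose, fromBlocks_multiply, fromBlocks_inj, Matrix.mul_zero,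
    Matrix.mul_one, Matrix.mul_neg, Matrix.neg_mul, zero_add, add_zero] at hS
  obtain ⟨h₁₁, h₁₂, h₂₁, h₂₂⟩ := hS
  rw [← sub_eq_zero]
  -- the brackets are the blocks of `Sᵀ J S - J`
  calc (a + b * A)ᵀ * (d * A + c) - (d * A + c)ᵀ * (a + b * A)
      = (-(cᵀ * b) + aᵀ * d - 1) * A + (-(cᵀ * a) + aᵀ * c)
          + A * (-(dᵀ * b) + bᵀ * d) * A + A * (-(dᵀ * a) + bᵀ * c + 1) := by
        simp only [transpose_add, transpose_mul, hA]; noncomm_ring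
    _ = 0 := by simp [h₁₁, h₁₂, h₂₁, h₂₂]

theorem transpose_mul_inv_eq_of_transpose_mul_comm {X Y : Matrix m m R} (hX : IsUnit X)
    (h : Xᵀ * Y = Yᵀ * X) : (Y * X⁻¹)ᵀ = Y * X⁻¹ := by
  have := hX.invertible
  rw [transpose_mul, transpose_nonsing_inv, inv_mul_eq_iff_eq_mul_of_invertible,
    ← Matrix.mul_assoc, h, Matrix.mul_assoc, mul_inv_of_invertible, Matrix.mul_one]

end CommRing

section RCLike

variable [RCLike 𝕜]

theorem posDef_one_sub_conjTranspose_mul_self_iff {B : Matrix m m 𝕜} :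
    (1 - Bᴴ * B).PosDef ↔ ∀ ⦃y⦄, y ≠ 0 → star (B *ᵥ y) ⬝ᵥ (B *ᵥ y) < star y ⬝ᵥ y := by
  have hB : ∀ y, star y ⬝ᵥ ((Bᴴ * B) *ᵥ y) = star (B *ᵥ y) ⬝ᵥ (B *ᵥ y) := fun y => by
    rw [star_mulVec, ← mulVec_mulVec, dotProduct_mulVec]
  simp only [posDef_iff_dotProduct_mulVec, sub_mulVec, one_mulVec, dotProduct_sub, hB, sub_pos,
    and_iff_right_iff_imp]
  exact fun _ => isHermitian_one.sub (isHermitian_conjTranspose_mul_self B)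

theorem isUnit_of_star_dotProduct_lt {X Y : Matrix m m 𝕜}
    (h : ∀ ⦃x⦄, x ≠ 0 → star (Y *ᵥ x) ⬝ᵥ (Y *ᵥ x) < star (X *ᵥ x) ⬝ᵥ (X *ᵥ x)) : IsUnit X := by
  refine mulVec_injective_iff_isUnit.mp fun x x' hxx' => by_contra fun hne => ?_
  have := h (sub_ne_zero.mpr hne)
  rw [mulVec_sub X, hxx', sub_self, star_zero, zero_dotProduct] at this
  exact (dotProduct_star_self_nonneg _).not_gt this

theorem posDef_one_sub_mul_inv_of_star_dotProduct_lt {X Y : Matrix m m 𝕜}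
    (h : ∀ ⦃x⦄, x ≠ 0 → star (Y *ᵥ x) ⬝ᵥ (Y *ᵥ x) < star (X *ᵥ x) ⬝ᵥ (X *ᵥ x)) :
    (1 - (Y * X⁻¹)ᴴ * (Y * X⁻¹)).PosDef := by
  refine posDef_one_sub_conjTranspose_mul_self_iff.mpr fun y hy => ?_
  have hXy : X *ᵥ (X⁻¹ *ᵥ y) = y := by
    have hdet := (isUnit_iff_isUnit_det X).mp (isUnit_of_star_dotProduct_lt h)
    rw [mulVec_mulVec, mul_nonsing_inv _ hdet, one_mulVec]
  have hx : X⁻¹ *ᵥ y ≠ 0 := fun h0 => hy (by rw [← hXy, h0, mulVec_zero])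
  simpa [← mulVec_mulVec, hXy] using h hx

theorem star_dotProduct_lt_of_preserves_kPositive {A a b c d : Matrix m m 𝕜}
    (hA : (1 - Aᴴ * A).PosDef)
    (hS : ∀ v, 0 < star v ⬝ᵥ (fromBlocks 1 0 0 (-1) *ᵥ v) →
      0 < star (fromBlocks a b c d *ᵥ v) ⬝ᵥ (fromBlocks 1 0 0 (-1) *ᵥ (fromBlocks a b c d *ᵥ v)))
    ⦃x : m → 𝕜⦄ (hx : x ≠ 0) :
    star ((d * A + c) *ᵥ x) ⬝ᵥ ((d * A + c) *ᵥ x) <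
      star ((a + b * A) *ᵥ x) ⬝ᵥ ((a + b * A) *ᵥ x) := by
  have hgraph := posDef_one_sub_conjTranspose_mul_self_iff.mp hA hx
  have himage := hS (Sum.elim x (A *ᵥ x)) (by
    rwa [star_sumElim_dotProduct_fromBlocks_one_neg_one_mulVec, sub_pos])
  rwa [fromBlocks_mulVec_sumElim_mulVec, star_sumElim_dotProduct_fromBlocks_one_neg_one_mulVec,
    sub_pos] at himage

end RCLike

end Matrix

theorem semigroup_action_preserves_Dn_general (n : ℕ)
    (A lam mu nu rho : Matrix (Fin n) (Fin n) ℂ)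
    (hA : Aᵀ = A) (hApd : ((1 : Matrix (Fin n) (Fin n) ℂ) - Aᴴ * A).PosDef)
    (hS : (fromBlocks lam mu nu rho)ᵀ *
        fromBlocks (0 : Matrix (Fin n) (Fin n) ℂ) (1 : Matrix (Fin n) (Fin n) ℂ)
          (-1 : Matrix (Fin n) (Fin n) ℂ) (0 : Matrix (Fin n) (Fin n) ℂ) *
        fromBlocks lam mu nu rho =
      fromBlocks (0 : Matrix (Fin n) (Fin n) ℂ) (1 : Matrix (Fin n) (Fin n) ℂ)
        (-1 : Matrix (Fin n) (Fin n) ℂ) (0 : Matrix (Fin n) (Fin n) ℂ))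
    (hpos : ∀ v : (Fin n ⊕ Fin n) → ℂ,
      0 < star v ⬝ᵥ ((fromBlocks (1 : Matrix (Fin n) (Fin n) ℂ) 0 0
          (-1 : Matrix (Fin n) (Fin n) ℂ)) *ᵥ v) →
      0 < star ((fromBlocks lam mu nu rho) *ᵥ v) ⬝ᵥ
        ((fromBlocks (1 : Matrix (Fin n) (Fin n) ℂ) 0 0
          (-1 : Matrix (Fin n) (Fin n) ℂ)) *ᵥ ((fromBlocks lam mu nu rho) *ᵥ v))) :
    IsUnit (lam + mu * A) ∧
    ((rho * A + nu) * (lam + mu * A)⁻¹)ᵀ = (rho * A + nu) * (lam + mu * A)⁻¹ ∧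
    ((1 : Matrix (Fin n) (Fin n) ℂ) -
      ((rho * A + nu) * (lam + mu * A)⁻¹)ᴴ * ((rho * A + nu) * (lam + mu * A)⁻¹)).PosDef := by
  have hlt := star_dotProduct_lt_of_preserves_kPositive hApd hpos
  have hunit := isUnit_of_star_dotProduct_lt hlt
  exact ⟨hunit,
    transpose_mul_inv_eq_of_transpose_mul_comm hunit (transpose_mul_comm_of_symplectic hS hA),
    posDef_one_sub_mul_inv_of_star_dotProduct_lt hlt⟩

/-- If `A` is complex symmetric with `I − AᴴA` positive definite and
`S = [[λ, μ], [ν, ρ]]` is complex symplectic mapping `K`-positive vectors to `K`-positive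
vectors, then `λ + μA` is invertible and `A' = (ρA + ν)(λ + μA)⁻¹` is again complex
symmetric with `I − A'ᴴA'` positive definite. -/
theorem semigroup_action_preserves_Dn (n : ℕ) (hn : 0 < n)
    (A lam mu nu rho : Matrix (Fin n) (Fin n) ℂ)
    (hA : Aᵀ = A) (hApd : ((1 : Matrix (Fin n) (Fin n) ℂ) - Aᴴ * A).PosDef)
    (hS : (fromBlocks lam mu nu rho)ᵀ *
        fromBlocks (0 : Matrix (Fin n) (Fin n) ℂ) (1 : Matrix (Fin n) (Fin n) ℂ)
          (-1 : Matrix (Fin n) (Fin n) ℂ) (0 : Matrix (Fin n) (Fin n) ℂ) *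
        fromBlocks lam mu nu rho =
      fromBlocks (0 : Matrix (Fin n) (Fin n) ℂ) (1 : Matrix (Fin n) (Fin n) ℂ)
        (-1 : Matrix (Fin n) (Fin n) ℂ) (0 : Matrix (Fin n) (Fin n) ℂ))
    (hpos : ∀ v : (Fin n ⊕ Fin n) → ℂ,
      0 < star v ⬝ᵥ ((fromBlocks (1 : Matrix (Fin n) (Fin n) ℂ) 0 0
          (-1 : Matrix (Fin n) (Fin n) ℂ)) *ᵥ v) →
      0 < star ((fromBlocks lam mu nu rho) *ᵥ v) ⬝ᵥ
        ((fromBlocks (1 : Matrix (Fin n) (Fin n) ℂ) 0 0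
          (-1 : Matrix (Fin n) (Fin n) ℂ)) *ᵥ ((fromBlocks lam mu nu rho) *ᵥ v))) :
    IsUnit (lam + mu * A) ∧
    ((rho * A + nu) * (lam + mu * A)⁻¹)ᵀ = (rho * A + nu) * (lam + mu * A)⁻¹ ∧
    ((1 : Matrix (Fin n) (Fin n) ℂ) -
      ((rho * A + nu) * (lam + mu * A)⁻¹)ᴴ * ((rho * A + nu) * (lam + mu * A)⁻¹)).PosDef :=
  semigroup_action_preserves_Dn_general n A lam mu nu rho hA hApd hS hpos
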